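/- arXiv:2403.17066 — 3 statements merged into one kernel-verified Lean document; each statement's English description precedes it below -/
import Mathlib

section
/- Let σ ∈ Σ_k be a permutation with cycles c₁,…,c_r, and let a = diag(t₁,…,t_k) be a diagonal matrix. Then the characteristic polynomial det(X·P_σ·a − Id) of the product of the permutation matrix P_σ with a equals ∏_{j=1}^{r} (X^{|c_j|} − ∏_{i ∈ c_j} t_i). -/
/-!
Off the diagonal, the characteristic matrix of `P_σ · diag(t)` is nonzero only at the
positions `(i, σ i)`, so it is block diagonal along the orbits of `σ`. A fixed point `i`
gives the block `X - t i`. On the orbit of a cycle `c`, the only permutations that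
contribute to the Leibniz expansion are the identity and `c⁻¹`, and they contribute
`X ^ |c|` and `-∏_{i ∈ c} t i`.
-/

open Polynomial Equiv Finset Matrix

namespace Equiv.Perm

variable {n : Type*} [Fintype n] [DecidableEq n]

theorem eq_one_or_eq_inv_of_forall_apply_eq_or {τ π : Perm n} (hτ : τ.IsCycle)
    (hsupp : τ.support = univ) (h : ∀ i, π i = i ∨ τ (π i) = i) : π = 1 ∨ π = τ⁻¹ := by
  have hmoves : ∀ i, τ i ≠ i := fun i => mem_support.mp (hsupp ▸ mem_univ i)
  -- a fixed point `j` of `π` forces `π (τ j) = τ j`, since `π (τ j) = j = π j` is impossible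
  have hfix : ∀ j, π j = j → π (τ j) = τ j := fun j hj =>
    (h (τ j)).resolve_right fun hτj => hmoves j (π.injective ((τ.injective hτj).trans hj.symm))
  by_cases hπ : ∃ j, π j = j
  · obtain ⟨j, hj⟩ := hπ
    left
    ext i
    obtain ⟨k, rfl⟩ := (hτ.sameCycle (hmoves j) (hmoves i)).exists_nat_pow_eq
    induction k with
    | zero => simpa using hj
    | succ k ih => simpa [pow_succ', mul_apply] using hfix _ ih
  · push Not at hπ
    right
    ext i
    exact (eq_symm_apply τ).mpr ((h i).resolve_left (hπ i))

theorem cycleOf_eq_iff_mem_support {σ c : Perm n} (hc : c ∈ σ.cycleFactorsFinset) {x : n} :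
    σ.cycleOf x = c ↔ x ∈ c.support := by
  refine ⟨fun h => ?_, fun hx => (cycle_is_cycleOf hx hc).symm⟩
  have hx : x ∈ σ.support := cycleOf_mem_cycleFactorsFinset_iff.mp (h ▸ hc)
  exact h ▸ mem_support_cycleOf_iff.mpr ⟨SameCycle.refl σ x, hx⟩

theorem support_subtypePerm_cycleOf_eq {σ c : Perm n} (hc : c ∈ σ.cycleFactorsFinset)
    (h : ∀ x, σ.cycleOf (σ x) = c ↔ σ.cycleOf x = c) :
    (σ.subtypePerm (p := (σ.cycleOf · = c)) h).support = univ := by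
  refine eq_univ_of_forall fun x => mem_support.mpr fun hfix => ?_
  have hx : x.1 ∈ c.support := (cycleOf_eq_iff_mem_support hc).mp x.2
  exact mem_support.mp hx (((mem_cycleFactorsFinset_iff.mp hc).2 x hx).trans
    (congrArg Subtype.val hfix))

theorem isCycle_subtypePerm_cycleOf_eq {σ c : Perm n} (hc : c ∈ σ.cycleFactorsFinset)
    (h : ∀ x, σ.cycleOf (σ x) = c ↔ σ.cycleOf x = c) :
    (σ.subtypePerm (p := (σ.cycleOf · = c)) h).IsCycle := by
  have hsupp := support_subtypePerm_cycleOf_eq hc h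
  obtain ⟨x₀, hx₀⟩ := (mem_cycleFactorsFinset_iff.mp hc).1.nonempty_support
  have hfib₀ : σ.cycleOf x₀ = c := (cycleOf_eq_iff_mem_support hc).mpr hx₀
  refine ⟨⟨x₀, hfib₀⟩, mem_support.mp (hsupp ▸ mem_univ _), fun y _ => ?_⟩
  rw [sameCycle_subtypePerm]
  exact (mem_support_cycleOf_iff.mp (hfib₀ ▸ (cycleOf_eq_iff_mem_support hc).mp y.2)).1

theorem cycleOf_mem_insert_one_cycleFactorsFinset (σ : Perm n) (x : n) :
    σ.cycleOf x ∈ insert 1 σ.cycleFactorsFinset := by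
  by_cases hx : σ x = x
  · exact mem_insert.mpr (Or.inl ((σ.cycleOf_eq_one_iff).mpr hx))
  · exact mem_insert_of_mem (cycleOf_mem_cycleFactorsFinset_iff.mpr (mem_support.mpr hx))

end Equiv.Perm

namespace Matrix

variable {R : Type*} [CommRing R] {n : Type*} [Fintype n] [DecidableEq n]

theorem permMatrix_mul_diagonal_apply (σ : Perm n) (t : n → R) (i j : n) :
    (σ.permMatrix R * diagonal t) i j = if σ i = j then t j else 0 := by
  simp [mul_diagonal, PEquiv.toMatrix_apply]

theorem charpoly_permMatrix_mul_diagonal_of_isCycle {τ : Perm n} (hτ : τ.IsCycle)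
    (hsupp : τ.support = univ) (u : n → R) :
    (τ.permMatrix R * diagonal u).charpoly = X ^ Fintype.card n - C (∏ i, u i) := by
  have hmoves : ∀ i, τ i ≠ i := fun i => Perm.mem_support.mp (hsupp ▸ mem_univ i)
  have hentry : ∀ π : Perm n, ∀ i, (τ.permMatrix R * diagonal u).charmatrix (π i) i =
      (if π i = i then X else 0) - if τ (π i) = i then C (u i) else 0 := by
    intro π i
    rw [charmatrix_apply, permMatrix_mul_diagonal_apply, diagonal_apply, apply_ite C, map_zero]
  have hinv : τ⁻¹ ≠ 1 := fun h => hτ.ne_one (inv_eq_one.mp h)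
  -- only `π = 1` and `π = τ⁻¹` contribute to the Leibniz expansion
  rw [charpoly, det_apply, Fintype.sum_eq_add 1 τ⁻¹ hinv.symm]
  · have hinv_moves : ∀ i, τ⁻¹ i ≠ i := fun i h => hmoves i (by simpa using congrArg τ h.symm)
    have hone : ∀ i, (τ.permMatrix R * diagonal u).charmatrix ((1 : Perm n) i) i = X := fun i => by
      rw [hentry, Perm.one_apply, if_pos rfl, if_neg (hmoves i), sub_zero]
    have hτinv : ∀ i, (τ.permMatrix R * diagonal u).charmatrix (τ⁻¹ i) i = -C (u i) := fun i => by
      rw [hentry, if_neg (hinv_moves i), Perm.coe_inv, apply_symm_apply, if_pos rfl, zero_sub]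
    simp only [hone, hτinv, prod_const, card_univ, prod_neg, ← map_prod, Perm.sign_inv, hτ.sign,
      hsupp, card_univ, map_one, one_smul]
    rw [Units.smul_def, zsmul_eq_mul]
    push_cast
    rw [neg_mul, ← mul_assoc, ← mul_pow, neg_one_mul, neg_neg, one_pow, one_mul, sub_eq_add_neg]
  · intro π hπ
    obtain ⟨i, hi, hτi⟩ : ∃ i, π i ≠ i ∧ τ (π i) ≠ i := by
      by_contra! hcon
      exact (Perm.eq_one_or_eq_inv_of_forall_apply_eq_or hτ hsupp
        fun i => or_iff_not_imp_left.mpr (hcon i)).elim hπ.1 hπ.2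
    rw [prod_eq_zero (mem_univ i) (by rw [hentry, if_neg hi, if_neg hτi, sub_zero]), smul_zero]

theorem det_eq_prod_toSquareBlock {α : Type*} [Fintype α] [DecidableEq α] (M : Matrix n n R)
    (b : n → α) (h : ∀ i j, b i ≠ b j → M i j = 0) : M.det = ∏ a, (M.toSquareBlock b a).det := by
  classical
  -- any linear order on `α` makes a block-diagonal matrix block triangular
  let : LinearOrder α := linearOrderOfSTO WellOrderingRel
  exact BlockTriangular.det_fintype fun i j hij => h i j hij.ne'

variable {α : Type*} [DecidableEq α] (σ : Perm n) (t : n → R) (b : n → α)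

theorem toSquareBlock_charmatrix_permMatrix_mul_diagonal (hb : ∀ x, b (σ x) = b x) (a : α) :
    (σ.permMatrix R * diagonal t).charmatrix.toSquareBlock b a =
      ((σ.subtypePerm (p := (b · = a)) fun x => by rw [hb]).permMatrix R *
        diagonal fun i : {x // b x = a} => t i).charmatrix := by
  ext i j
  simp [toSquareBlock_def, charmatrix_apply, diagonal_apply, Subtype.ext_iff]

theorem charpoly_permMatrix_mul_diagonal_eq_prod_fibers [Fintype α] (hb : ∀ x, b (σ x) = b x) :
    (σ.permMatrix R * diagonal t).charpoly =
      ∏ a, ((σ.subtypePerm (p := (b · = a)) fun x => by rw [hb]).permMatrix R *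
        diagonal fun i : {x // b x = a} => t i).charpoly := by
  rw [charpoly, det_eq_prod_toSquareBlock _ b]
  · simp only [toSquareBlock_charmatrix_permMatrix_mul_diagonal σ t b hb, charpoly]
  · intro i j hij
    have hne : i ≠ j := fun h => hij (h ▸ rfl)
    have hσ : σ i ≠ j := fun h => hij (h ▸ hb i).symm
    rw [charmatrix_apply_ne _ _ _ hne, permMatrix_mul_diagonal_apply, if_neg hσ, map_zero, neg_zero]

theorem charpoly_permMatrix_mul_diagonal_cycleOf_fiber {c : Perm n}
    (hc : c ∈ σ.cycleFactorsFinset) (h : ∀ x, σ.cycleOf (σ x) = c ↔ σ.cycleOf x = c) :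
    ((σ.subtypePerm (p := (σ.cycleOf · = c)) h).permMatrix R *
        diagonal fun i : {x // σ.cycleOf x = c} => t i).charpoly =
      X ^ c.support.card - C (∏ i ∈ c.support, t i) := by
  have hfib : ∀ x, x ∈ c.support ↔ σ.cycleOf x = c := fun x =>
    (Perm.cycleOf_eq_iff_mem_support hc).symm
  rw [charpoly_permMatrix_mul_diagonal_of_isCycle (Perm.isCycle_subtypePerm_cycleOf_eq hc h)
    (Perm.support_subtypePerm_cycleOf_eq hc h), Fintype.card_of_subtype _ hfib,
    prod_subtype _ hfib]

theorem charpoly_permMatrix_mul_diagonal_fixedPoints_fiber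
    (h : ∀ x, σ.cycleOf (σ x) = 1 ↔ σ.cycleOf x = 1) :
    ((σ.subtypePerm (p := (σ.cycleOf · = 1)) h).permMatrix R *
        diagonal fun i : {x // σ.cycleOf x = 1} => t i).charpoly =
      ∏ i ∈ σ.supportᶜ, (X - C (t i)) := by
  have hfib : ∀ x, x ∈ σ.supportᶜ ↔ σ.cycleOf x = 1 := fun x => by
    rw [mem_compl, Perm.notMem_support, Perm.cycleOf_eq_one_iff]
  have hone : σ.subtypePerm (p := (σ.cycleOf · = 1)) h = 1 :=
    Equiv.ext fun x => Subtype.ext ((σ.cycleOf_eq_one_iff).mp x.2)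
  rw [hone, permMatrix_one, one_mul, charpoly_diagonal, prod_subtype _ hfib]

end Matrix

/-- Let `σ ∈ Σ_k` and let `a = diag(t₁,…,t_k)`. The characteristic polynomial of the
product `P_σ · a` of the permutation matrix of `σ` with `a` is the product, over the
cycles `c` of `σ`, of the factors `X^{|c|} − ∏_{i ∈ c} t_i` (fixed points of `σ`, i.e.
cycles of length one, contribute the factors `X − t_i`). -/
theorem charpoly_permMatrix_mul_diagonal
    (R : Type*) [CommRing R] (k : ℕ) (σ : Equiv.Perm (Fin k)) (t : Fin k → R) :
    Matrix.charpoly (σ.permMatrix R * Matrix.diagonal t) =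
      (∏ c ∈ σ.cycleFactorsFinset,
        (Polynomial.X ^ c.support.card - Polynomial.C (∏ i ∈ c.support, t i))) *
      ∏ i ∈ σ.supportᶜ, (Polynomial.X - Polynomial.C (t i)) := by
  have hempty : ∀ c ∈ univ, c ∉ insert 1 σ.cycleFactorsFinset →
      ((σ.subtypePerm (p := (σ.cycleOf · = c)) fun x => by rw [σ.cycleOf_self_apply]).permMatrix
          R * diagonal fun i : {x // σ.cycleOf x = c} => t i).charpoly = 1 := by
    intro c _ hc
    have : IsEmpty {x // σ.cycleOf x = c} :=
      ⟨fun x => hc (x.2 ▸ σ.cycleOf_mem_insert_one_cycleFactorsFinset x)⟩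
    exact charpoly_isEmpty
  rw [charpoly_permMatrix_mul_diagonal_eq_prod_fibers σ t σ.cycleOf σ.cycleOf_self_apply,
    ← prod_subset (subset_univ _) hempty,
    prod_insert fun h1 => Perm.not_isCycle_one (Perm.mem_cycleFactorsFinset_iff.mp h1).1,
    charpoly_permMatrix_mul_diagonal_fixedPoints_fiber, mul_comm]
  exact congrArg (· * _) (prod_congr rfl fun c hc =>
    charpoly_permMatrix_mul_diagonal_cycleOf_fiber σ t hc _)
end

section
/- In the free Lie-admissible algebra on one generator x over a field of characteristic zero, the homogeneous component of degree 2 in x is one-dimensional (spanned by x·x), the component of degree 3 is two-dimensional, the component of degree 4 is five-dimensional, and the component of degree 5 is fourteen-dimensional. -/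
namespace FreeLieAdmissible

/-- Words in the free magma on one generator `x`; these index a basis of the free
nonassociative algebra on one generator. -/
abbrev W : Type := FreeMagma Unit

/-- The free nonassociative (magmatic) algebra on one generator over `ℚ`. -/
abbrev A : Type := MonoidAlgebra ℚ W

/-- Degree of a magma word = number of occurrences of the generator. -/
def len : W → ℕ
  | FreeMagma.of _ => 1
  | FreeMagma.mul a b => len a + len b

/-- The Lie-admissibility relators
`Σ_{σ∈Σ₃} sign(σ) ((v_{σ1} v_{σ2}) v_{σ3} − v_{σ1}(v_{σ2} v_{σ3}))`. -/
def relators : Set A :=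
  {z | ∃ v : Fin 3 → A, z =
    ∑ σ : Equiv.Perm (Fin 3),
      (Equiv.Perm.sign σ : ℤ) •
        ((v (σ 0) * v (σ 1)) * v (σ 2) - v (σ 0) * (v (σ 1) * v (σ 2)))}

/-- The two-sided (nonunital, nonassociative) ideal generated by the Lie-admissibility
relators: the smallest submodule containing them and stable under left and right
multiplication. -/
noncomputable def I : Submodule ℚ A :=
  sInf {J : Submodule ℚ A | relators ⊆ J ∧
    ∀ a : A, ∀ x ∈ J, a * x ∈ J ∧ x * a ∈ J}

/-- The span of the basis monomials of degree `n`. -/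
noncomputable def degComponent (n : ℕ) : Submodule ℚ A :=
  Submodule.span ℚ ((fun w => MonoidAlgebra.single w (1 : ℚ)) '' {w : W | len w = n})

/-- The image in the free Lie-admissible algebra `A / I` of the degree-`n` component. -/
noncomputable def laComponent (n : ℕ) : Submodule ℚ (A ⧸ I) :=
  Submodule.map I.mkQ (degComponent n)

/-!
The Lie-admissibility relator is the alternatization of the associator, hence an alternating
trilinear map, determined by its values on triples of distinct basis words, where it is
homogeneous of their total degree. Three distinct
words have total degree at least 6: otherwise two of them would have the same degree 1 or 2, and
there is only one word of each of these degrees. So the relators, and with them the whole ideal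
`I`, live in degrees `≥ 6`; below that the free Lie-admissible algebra is the free magma algebra,
whose degree-`n + 1` component has dimension `catalan n`, the number of binary trees with `n`
internal nodes.
-/

open MonoidAlgebra Function

lemma len_pos (w : W) : 0 < len w := by
  induction w with
  | of _ => exact Nat.one_pos
  | mul a b iha _ => exact Nat.add_pos_left iha _

lemma eq_of_len_eq_one {w : W} (h : len w = 1) : w = FreeMagma.of () := by
  cases w with
  | of _ => rfl
  | mul a b => have := len_pos a; have := len_pos b; simp only [len] at h; omega

lemma eq_of_len_eq_two {w : W} (h : len w = 2) :
    w = FreeMagma.mul (FreeMagma.of ()) (FreeMagma.of ()) := by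
  cases w with
  | of _ => simp [len] at h
  | mul a b =>
    have := len_pos a; have := len_pos b; simp only [len] at h
    rw [eq_of_len_eq_one (w := a) (by omega), eq_of_len_eq_one (w := b) (by omega)]

lemma eq_of_len_eq_of_len_le_two {a b : W} (h : len a = len b) (h2 : len a ≤ 2) : a = b := by
  have := len_pos a
  interval_cases ha : len a
  · rw [eq_of_len_eq_one ha, eq_of_len_eq_one h.symm]
  · rw [eq_of_len_eq_two ha, eq_of_len_eq_two h.symm]

lemma six_le_sum_len_of_injective {w : Fin 3 → W} (hw : Injective w) : 6 ≤ ∑ i, len (w i) := by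
  have distinct (i j : Fin 3) (hij : i ≠ j) : ¬(len (w i) = len (w j) ∧ len (w i) ≤ 2) :=
    fun ⟨h, h2⟩ => hij (hw (eq_of_len_eq_of_len_le_two h h2))
  have := distinct 0 1 (by decide); have := distinct 0 2 (by decide)
  have := distinct 1 2 (by decide)
  have := len_pos (w 0); have := len_pos (w 1); have := len_pos (w 2)
  rw [Fin.sum_univ_three]
  omega

noncomputable abbrev degGE (k : ℕ) : Submodule ℚ A := supported ℚ ℚ {w : W | k ≤ len w}

lemma mem_degGE_zero (p : A) : p ∈ degGE 0 := fun w _ => Nat.zero_le (len w)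

lemma mul_mem_degGE {k l : ℕ} {p q : A} (hp : p ∈ degGE k) (hq : q ∈ degGE l) :
    p * q ∈ degGE (k + l) := by
  classical
  intro w hw
  obtain ⟨u, hu, t, ht, rfl⟩ := Finset.mem_mul.mp (support_coeff_mul_subset p q hw)
  exact Nat.add_le_add (hp hu) (hq ht)

lemma degComponent_eq_supported (n : ℕ) :
    degComponent n = supported ℚ ℚ {w : W | len w = n} :=
  (supported_eq_span_single ℚ _).symm

lemma degComponent_le_degGE {k n : ℕ} (h : k ≤ n) : degComponent n ≤ degGE k := by
  rw [degComponent_eq_supported]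
  exact supported_mono fun w (hw : len w = n) => show k ≤ len w from hw ▸ h

lemma disjoint_degComponent_degGE {k n : ℕ} (h : n < k) : Disjoint (degComponent n) (degGE k) := by
  rw [degComponent_eq_supported, Submodule.disjoint_def]
  intro p hn hk
  ext w
  by_cases hw : len w = n
  · exact (mem_supported'.mp hk) w fun (h' : k ≤ len w) => by omega
  · exact (mem_supported'.mp hn) w hw

section Associator

variable (R M : Type*) [CommRing R] [NonUnitalNonAssocRing M] [Module R M] [IsScalarTower R M M]
  [SMulCommClass R M M]

def associator : MultilinearMap R (fun _ : Fin 3 => M) M where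
  toFun v := (v 0 * v 1) * v 2 - v 0 * (v 1 * v 2)
  map_update_add' := by
    intro inst v i a b
    obtain rfl : inst = instDecidableEqFin 3 := Subsingleton.elim _ _
    fin_cases i <;> simp [add_mul, mul_add, sub_add_sub_comm]
  map_update_smul' := by
    intro inst v i c a
    obtain rfl : inst = instDecidableEqFin 3 := Subsingleton.elim _ _
    fin_cases i <;> simp [smul_sub, smul_mul_assoc, mul_smul_comm]

end Associator

noncomputable abbrev lieAdmissibleRelator : A [⋀^Fin 3]→ₗ[ℚ] A :=
  MultilinearMap.alternatization (associator ℚ A)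

lemma relators_eq_range : relators = Set.range lieAdmissibleRelator := by
  ext z
  simp [relators, MultilinearMap.alternatization_apply, associator, Units.smul_def, eq_comm]

lemma associator_single_mem (w : Fin 3 → W) :
    associator ℚ A (fun i => single (w i) 1) ∈ degComponent (∑ i, len (w i)) := by
  simp only [associator, MultilinearMap.coe_mk, single_mul_single, one_mul]
  refine sub_mem (Submodule.subset_span ⟨_, ?_, rfl⟩) (Submodule.subset_span ⟨_, ?_, rfl⟩) <;>
    simp [Fin.sum_univ_three, len, add_assoc]

lemma lieAdmissibleRelator_single_mem (w : Fin 3 → W) :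
    lieAdmissibleRelator (fun i => single (w i) 1) ∈ degComponent (∑ i, len (w i)) := by
  rw [MultilinearMap.alternatization_apply]
  refine Submodule.sum_mem _ fun σ _ => ?_
  rw [Units.smul_def]
  refine zsmul_mem ?_ _
  rw [MultilinearMap.domDomCongr_apply, ← Equiv.sum_comp σ fun i => len (w i)]
  exact associator_single_mem (w ∘ σ)

lemma lieAdmissibleRelator_mem_degGE (v : Fin 3 → A) : lieAdmissibleRelator v ∈ degGE 6 := by
  have hzero : (degGE 6).mkQ.compAlternatingMap lieAdmissibleRelator = 0 := by
    refine (basis W ℚ).ext_alternating fun w hw => ?_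
    simp only [basis_apply, LinearMap.compAlternatingMap_apply, AlternatingMap.zero_apply,
      Submodule.mkQ_apply, Submodule.Quotient.mk_eq_zero]
    exact degComponent_le_degGE (six_le_sum_len_of_injective hw)
      (lieAdmissibleRelator_single_mem w)
  simpa using congrArg (· v) hzero

lemma I_le_degGE : I ≤ degGE 6 := by
  refine sInf_le ⟨?_, fun a p hp => ⟨?_, ?_⟩⟩
  · rw [relators_eq_range]
    rintro _ ⟨v, rfl⟩
    exact lieAdmissibleRelator_mem_degGE v
  · simpa only [zero_add] using mul_mem_degGE (mem_degGE_zero a) hp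
  · exact mul_mem_degGE hp (mem_degGE_zero a)

lemma finrank_laComponent_eq_finrank_degComponent {n : ℕ} (hn : n ≤ 5) :
    Module.finrank ℚ (laComponent n) = Module.finrank ℚ (degComponent n) := by
  have hdisj : Disjoint (degComponent n) I :=
    (disjoint_degComponent_degGE (Nat.lt_succ_of_le hn)).mono_right I_le_degGE
  have hinj : Injective (I.mkQ.domRestrict (degComponent n)) := by
    rw [← LinearMap.ker_eq_bot, LinearMap.ker_domRestrict, Submodule.ker_mkQ,
      ← Submodule.disjoint_iff_comap_eq_bot]
    exact hdisj
  rw [laComponent, ← LinearMap.range_domRestrict, LinearMap.finrank_range_of_inj hinj]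

lemma finrank_degComponent (n : ℕ) :
    Module.finrank ℚ (degComponent n) = Nat.card {w : W | len w = n} := by
  rw [degComponent_eq_supported]
  exact Module.finrank_eq_nat_card_basis (Finsupp.basisSingleOne.map (supportedEquivFinsupp _).symm)

def toBinaryTree : W → BinaryTree Unit
  | .of _ => .nil
  | .mul a b => .node () (toBinaryTree a) (toBinaryTree b)

def ofBinaryTree : BinaryTree Unit → W
  | .nil => .of ()
  | .node _ l r => .mul (ofBinaryTree l) (ofBinaryTree r)

def equivBinaryTree : W ≃ BinaryTree Unit where
  toFun := toBinaryTree
  invFun := ofBinaryTree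
  left_inv w := by induction w with
    | of _ => rfl
    | mul a b iha ihb => simp [toBinaryTree, ofBinaryTree, iha, ihb]
  right_inv t := by induction t with
    | nil => rfl
    | node _ l r ihl ihr => simp [toBinaryTree, ofBinaryTree, ihl, ihr]

lemma numNodes_toBinaryTree (w : W) : (toBinaryTree w).numNodes + 1 = len w := by
  induction w with
  | of _ => rfl
  | mul a b iha ihb => simp only [toBinaryTree, BinaryTree.numNodes, len]; omega

lemma card_len_eq_succ (n : ℕ) : Nat.card {w : W | len w = n + 1} = catalan n := by
  rw [← BinaryTree.treesOfNumNodesEq_card_eq_catalan, ← Nat.card_eq_finsetCard]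
  refine Nat.card_congr (equivBinaryTree.subtypeEquiv fun w => ?_)
  rw [BinaryTree.mem_treesOfNumNodesEq, Set.mem_ofPred_eq, ← numNodes_toBinaryTree]
  exact Nat.succ_inj

theorem finrank_laComponent_succ_eq_catalan {n : ℕ} (hn : n ≤ 4) :
    Module.finrank ℚ (laComponent (n + 1)) = catalan n := by
  rw [finrank_laComponent_eq_finrank_degComponent (by omega), finrank_degComponent,
    card_len_eq_succ]

lemma catalan_four : catalan 4 = 14 := by
  norm_num [catalan_eq_centralBinom_div, Nat.centralBinom, Nat.choose]

lemma laComponent_two : laComponent 2 = Submodule.span ℚ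
    {I.mkQ (single (FreeMagma.mul (FreeMagma.of ()) (FreeMagma.of ())) (1 : ℚ))} := by
  have hwords : {w : W | len w = 2} = {FreeMagma.mul (FreeMagma.of ()) (FreeMagma.of ())} :=
    Set.ext fun w => ⟨eq_of_len_eq_two, fun h => h ▸ rfl⟩
  rw [laComponent, degComponent, hwords, Set.image_singleton, Submodule.map_span,
    Set.image_singleton]

/-- In the free Lie-admissible algebra on one generator over a field of characteristic
zero, the homogeneous components of degrees 2, 3, 4, 5 have dimensions 1, 2, 5, 14
respectively (the degree-2 component being spanned by `x·x`). -/
theorem finrank_laComponent :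
    Module.finrank ℚ (laComponent 2) = 1 ∧
    laComponent 2 = Submodule.span ℚ
      {I.mkQ (MonoidAlgebra.single (FreeMagma.mul (FreeMagma.of ()) (FreeMagma.of ())) (1 : ℚ))} ∧
    Module.finrank ℚ (laComponent 3) = 2 ∧
    Module.finrank ℚ (laComponent 4) = 5 ∧
    Module.finrank ℚ (laComponent 5) = 14 :=
  ⟨(finrank_laComponent_succ_eq_catalan (n := 1) (by norm_num)).trans catalan_one, laComponent_two,
    (finrank_laComponent_succ_eq_catalan (n := 2) (by norm_num)).trans catalan_two,
    (finrank_laComponent_succ_eq_catalan (n := 3) (by norm_num)).trans catalan_three,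
    (finrank_laComponent_succ_eq_catalan (n := 4) (by norm_num)).trans catalan_four⟩

end FreeLieAdmissible
end

section
/- Let O₁, O₂ be Koszul quadratic operads with exponential generating series f₁, f₂ for dimensions, and suppose their quadratic duals have generating series g₁, g₂. If the coproduct O₁ ∨ O₂ is Koszul with quadratic dual whose generating series is g₁ + g₂ − t (the connected sum), then the generating series f of O₁ ∨ O₂ satisfies −(g₁(−f) + g₂(−f) − (−f)) = t. In particular, for O₁ = PreLie (quadratic dual Perm, g₁(t) = t·e^t) and O₂ = ComMag (quadratic dual with g₂(t) = t + t²/2), the generating series f of PreLie ∨ ComMag satisfies f·exp(−f) − f²/2 = t. -/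
namespace KoszulGeneratingSeries

variable (K : Type*) [Field K] [CharZero K]

/-- Composition (substitution) of formal power series: `(f ∘ g)` for `g` with zero
constant term, defined coefficientwise by `coeff n (f∘g) = Σ_{k≤n} coeff k f · coeff n (g^k)`. -/
noncomputable def compPS (f g : PowerSeries K) : PowerSeries K :=
  PowerSeries.mk fun n =>
    ∑ k ∈ Finset.range (n + 1), (PowerSeries.coeff k f) * (PowerSeries.coeff n (g ^ k))

/-- Substitution of a power series with zero constant term into `exp`. -/
noncomputable def expComp (f : PowerSeries K) : PowerSeries K :=
  PowerSeries.mk fun n =>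
    ∑ k ∈ Finset.range (n + 1), (Nat.factorial k : K)⁻¹ * (PowerSeries.coeff n (f ^ k))

/-!
Substitution of series without constant term is associative, so a compositional right inverse
is also a left inverse: if `f(u) = X` then `f'(0)` is a unit, `f` has a two-sided inverse `v`,
and `u = v(f(u)) = v`. For `u = −h(−X)` this turns `f(−h(−X)) = X` into `−h(−f) = X`, which is
the first identity once `h = g₁ + g₂ − X` is expanded. The second identity follows from
`f·e^{−f} − f²/2 = X` by multiplying with `e^f` and using `e^f·e^{−f} = 1`.
-/

open PowerSeries

section Substitution

variable {R : Type*} [CommRing R]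

theorem coeff_pow_eq_zero_of_lt {g : R⟦X⟧} (hg : constantCoeff g = 0) {n k : ℕ} (h : n < k) :
    coeff n (g ^ k) = 0 :=
  coeff_of_lt_order n <| (Nat.cast_lt.mpr h).trans_le (le_order_pow_of_constantCoeff_eq_zero k hg)

theorem subst_neg {a : R⟦X⟧} (ha : HasSubst a) (f : R⟦X⟧) : subst a (-f) = -subst a f := by
  rw [← coe_substAlgHom ha, map_neg]

theorem subst_subst_neg_X {a : R⟦X⟧} (ha : HasSubst a) (f : R⟦X⟧) :
    subst a (subst (-X : R⟦X⟧) f) = subst (-a) f := by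
  rw [subst_comp_subst_apply (HasSubst.of_constantCoeff_zero' (by simp)) ha,
    subst_neg ha, subst_X ha]

theorem coeff_one_subst {u : R⟦X⟧} (hu : constantCoeff u = 0) (f : R⟦X⟧) :
    coeff 1 (subst u f) = coeff 1 f * coeff 1 u := by
  rw [coeff_subst' (HasSubst.of_constantCoeff_zero' hu), finsum_eq_single _ 1]
  · simp
  · intro d hd
    obtain hd | hd := Nat.lt_or_gt_of_ne hd
    · simp [Nat.lt_one_iff.mp hd]
    · rw [coeff_pow_eq_zero_of_lt hu hd, smul_zero]

theorem subst_eq_X_of_subst_eq_X {f u : R⟦X⟧} (hf : constantCoeff f = 0)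
    (hu : constantCoeff u = 0) (h : subst u f = X) : subst f u = X := by
  have hunit : IsUnit (coeff 1 f) :=
    .of_mul_eq_one (coeff 1 u) (by rw [← coeff_one_subst hu, h, coeff_one_X])
  have hinv_left := subst_substInvOfIsUnit_left f hf hunit
  have hu_eq : u = f.substInvOfIsUnit hunit :=
    calc u = subst u (X : R⟦X⟧) := (subst_X (.of_constantCoeff_zero' hu)).symm
      _ = subst u (subst f (f.substInvOfIsUnit hunit)) := by rw [hinv_left]
      _ = f.substInvOfIsUnit hunit := by
        rw [subst_comp_subst_apply (.of_constantCoeff_zero' hf) (.of_constantCoeff_zero' hu), h,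
          X_subst]
  rw [hu_eq, hinv_left]

theorem subst_exp_mul_subst_exp_neg {A : Type*} [CommRing A] [Algebra ℚ A] {f : A⟦X⟧}
    (hf : HasSubst f) : subst f (exp A) * subst (-f) (exp A) = 1 := by
  have hneg : subst (-f) (exp A) = subst f (evalNegHom (exp A)) := by
    rw [← subst_subst_neg_X hf, evalNegHom, rescale_eq_subst, neg_smul, one_smul]
  rw [hneg, ← subst_mul hf, exp_mul_exp_neg_eq_one, ← coe_substAlgHom hf, map_one]

end Substitution

theorem compPS_eq_subst {F : Type*} [Field F] (f : F⟦X⟧) {g : F⟦X⟧}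
    (hg : constantCoeff g = 0) : compPS F f g = subst g f := by
  ext n
  rw [compPS, coeff_mk, coeff_subst' (.of_constantCoeff_zero' hg),
    finsum_eq_sum_of_support_subset _ (s := Finset.range (n + 1))]
  · simp only [smul_eq_mul]
  · intro d hd
    by_contra hdn
    simp only [Function.mem_support, Finset.coe_range, Set.mem_Iio, not_lt] at hd hdn
    exact hd (by rw [coeff_pow_eq_zero_of_lt hg hdn, smul_zero])

theorem expComp_eq_subst {F : Type*} [Field F] [CharZero F] {f : F⟦X⟧}
    (hf : constantCoeff f = 0) : expComp F f = subst f (exp F) := by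
  rw [← compPS_eq_subst _ hf]
  ext n
  simp [expComp, compPS, coeff_exp]

/-- Koszul duality for the coproduct, at the level of generating series.
(1) General form: if `f` (the generating series of the Koszul coproduct `O₁ ∨ O₂`, with
zero constant term) satisfies the Koszul functional inversion
`f(−h(−t)) = t` with `h = g₁ + g₂ − t` (the connected sum of the generating series of
the quadratic duals), then `−(g₁(−f) + g₂(−f) − (−f)) = t`.
(2) In particular, for `O₁ = PreLie` (dual `Perm`, `g₁(t) = t·eᵗ`) and `O₂ = ComMag`
(`g₂(t) = t + t²/2`): if `f·e^{−f} − f²/2 = t` then `f = t·e^f + (f²/2)·e^f`. -/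
theorem koszul_coproduct_series :
    (∀ f g₁ g₂ : PowerSeries K,
      PowerSeries.constantCoeff f = 0 →
      PowerSeries.constantCoeff g₁ = 0 →
      PowerSeries.constantCoeff g₂ = 0 →
      compPS K f (-(compPS K (g₁ + g₂ - PowerSeries.X) (-PowerSeries.X))) = PowerSeries.X →
      -(compPS K g₁ (-f) + compPS K g₂ (-f) - (-f)) = PowerSeries.X)
    ∧
    (∀ f : PowerSeries K,
      PowerSeries.constantCoeff f = 0 →
      f * expComp K (-f) - PowerSeries.C (2 : K)⁻¹ * f ^ 2 = PowerSeries.X →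
      f = PowerSeries.X * expComp K f + PowerSeries.C (2 : K)⁻¹ * f ^ 2 * expComp K f) := by
  constructor
  · intro f g₁ g₂ hf hg₁ hg₂ hinv
    have hnegX : constantCoeff (-X : K⟦X⟧) = 0 := by simp
    have hnegf : constantCoeff (-f) = 0 := by simp [hf]
    have hh : constantCoeff (g₁ + g₂ - X) = 0 := by simp [hg₁, hg₂]
    have hu : constantCoeff (-subst (-X : K⟦X⟧) (g₁ + g₂ - X)) = 0 := by
      rw [map_neg, neg_eq_zero]
      exact constantCoeff_subst_eq_zero hnegX _ hh
    have hf' : HasSubst f := .of_constantCoeff_zero' hf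
    rw [compPS_eq_subst _ hnegX, compPS_eq_subst _ hu] at hinv
    rw [compPS_eq_subst _ hnegf, compPS_eq_subst _ hnegf]
    calc -(subst (-f) g₁ + subst (-f) g₂ - -f)
        = subst f (-subst (-X : K⟦X⟧) (g₁ + g₂ - X)) := by
          rw [subst_neg hf', subst_subst_neg_X hf', subst_sub (.of_constantCoeff_zero' hnegf),
            subst_add (.of_constantCoeff_zero' hnegf), subst_X (.of_constantCoeff_zero' hnegf)]
      _ = X := subst_eq_X_of_subst_eq_X hf hu hinv
  · intro f hf hfun
    have hexp := subst_exp_mul_subst_exp_neg (.of_constantCoeff_zero' hf)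
    rw [← expComp_eq_subst hf, ← expComp_eq_subst (by simp [hf])] at hexp
    linear_combination expComp K f * hfun - f * hexp

end KoszulGeneratingSeries
end
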